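/- Let D be a connected finite graph. The map sending an elementary pair (G,F) of maximal nested sets on D to the triple (supp(G,F); α^{supp}_G, α^{supp}_F) induces a bijection between equivalence classes of elementary pairs (where (G,F) ~ (G',F') iff G\F = G'\F' and F\G = F'\G') and triples (B; α, β) consisting of a connected subdiagram B of D together with an ordered pair of distinct vertices α, β of B. -/

import Mathlib

open scoped Classical

section NestedSets

variable {V : Type*} [Fintype V] [DecidableEq V]

/-- The (induced subgraph on the) finite vertex set `B` is connected (in particular nonempty). -/
def Conn (G : SimpleGraph V) (B : Finset V) : Prop :=
  (G.induce (B : Set V)).Connected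

/-- Two vertex sets are orthogonal: no edge of `G` joins a vertex of one to a vertex
of the other. -/
def Orth (G : SimpleGraph V) (B C : Finset V) : Prop :=
  ∀ a ∈ B, ∀ b ∈ C, ¬ G.Adj a b

/-- Two subdiagrams are compatible if one contains the other or they are orthogonal. -/
def Compat (G : SimpleGraph V) (B C : Finset V) : Prop :=
  B ⊆ C ∨ C ⊆ B ∨ Orth G B C

/-- A nested set on the (connected) diagram `D` with vertex set `V`: a collection of
pairwise compatible connected subdiagrams containing `D` itself. -/
def Nested (G : SimpleGraph V) (H : Finset (Finset V)) : Prop :=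
  Finset.univ ∈ H ∧ (∀ B ∈ H, Conn G B) ∧ ∀ B ∈ H, ∀ C ∈ H, Compat G B C

/-- `iN H B` is the union of the elements of `H` strictly contained in `B`;
this coincides with the union of the *maximal* elements of `H` strictly contained in `B`. -/
noncomputable def iN (H : Finset (Finset V)) (B : Finset V) : Finset V :=
  (H.filter fun C => C ⊂ B).sup id

/-- `nN H B = n(B;H)` is the number of vertices of `B` not covered by the maximal
elements of `H` strictly contained in `B`. -/
noncomputable def nN (H : Finset (Finset V)) (B : Finset V) : ℕ :=
  (B \ iN H B).card

/-- `C` is a connected component of (the induced subgraph on) `S`. -/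
def IsCC (G : SimpleGraph V) (S C : Finset V) : Prop :=
  C ⊆ S ∧ Conn G C ∧ ∀ C', C ⊆ C' → C' ⊆ S → Conn G C' → C' = C

/-- A maximal nested set on `D`. -/
def MaxNested (G : SimpleGraph V) (F : Finset (Finset V)) : Prop :=
  Nested G F ∧ ∀ K, Nested G K → F ⊆ K → K = F

end NestedSets

/-- The support of a pair of maximal nested sets: the union of the elements of the
symmetric difference. For an elementary pair this is the unique unsaturated element
of `F ∩ Gs`. -/
noncomputable def suppP {V : Type*} [Fintype V] [DecidableEq V]
    (F Gs : Finset (Finset V)) : Finset V :=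
  ((F \ Gs) ∪ (Gs \ F)).sup id

/-- An elementary pair of maximal nested sets: the two members differ by one element. -/
def ElemPair {V : Type*} [Fintype V] [DecidableEq V] (F Gs : Finset (Finset V)) : Prop :=
  (F \ Gs).card = 1 ∧ (Gs \ F).card = 1

/-!
For `B` in a maximal nested set `F`, the set `B \ iN F B` is a single vertex, the pivot
`α^B_F`: it is nonempty because the largest elements of `F` below `B` cannot cover the connected
`B`, and a second uncovered vertex `b` would make the component of `B - b` through the first one
compatible with all of `F`, hence a member of `F` covering it. The same argument puts every
component of `B - α^B_F` into `F`.

For an elementary pair with `F \ Gs = {P}` and `Gs \ F = {Q}`, the sets `P` and `Q` are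
incompatible, and `P ∪ Q` is compatible with every member of `F` and of `Gs`, so it is the
support `B`. Then `Q` is the component of `B - α^B_Gs` containing `α^B_F`, and symmetrically for
`P`; so the triple determines the pair, and conversely a component of `B - a` determines `a`.

For surjectivity let `P` be the component of `B - β` through `α` and `Q` that of `B - α` through
`β`. Extend `D`, `B` and the components of `B - β` and of `P - α` to a maximal nested set `F`.
Exchanging `P` for `Q` keeps `F` nested; a maximal extension `Gs` of the result has pivots `α` at
`B` and `β` at `Q`, so exchanging `Q` back for `P` in `Gs` gives a nested set containing `F`,
which by maximality is `F`.
-/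

open Finset

lemma Finset.forall_eq_singleton_iff_iff {α : Type*} {s t : Finset α} {a : α} (hs : s = {a}) :
    (∀ x, s = {x} ↔ t = {x}) ↔ s = t :=
  ⟨fun h => (((h a).mp hs).trans hs.symm).symm, fun h _ => h ▸ Iff.rfl⟩

lemma Finset.mem_sdiff_of_sdiff_eq_singleton {α : Type*} [DecidableEq α] {s t : Finset α} {a : α}
    (h : s \ t = {a}) : a ∈ s ∧ a ∉ t :=
  mem_sdiff.mp (h ▸ mem_singleton_self a)

lemma Finset.mem_of_sdiff_eq_singleton {α : Type*} [DecidableEq α] {s t : Finset α} {a x : α}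
    (h : s \ t = {a}) (hx : x ∈ s) (hxa : x ≠ a) : x ∈ t := by
  by_contra hxt
  exact hxa (mem_singleton.mp (h ▸ mem_sdiff.mpr ⟨hx, hxt⟩))

lemma Finset.sdiff_eq_singleton_of_insert_erase_eq {α : Type*} [DecidableEq α]
    {s t : Finset α} {a b : α} (h : insert a (t.erase b) = s) (ha : a ∉ t) (hb : b ∈ t) :
    s \ t = {a} ∧ t \ s = {b} := by
  subst h
  have hab : a ≠ b := fun e => ha (e ▸ hb)
  constructor <;> ext x <;> by_cases hxa : x = a <;> by_cases hxb : x = b <;> simp_all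

section Connectivity

variable {V : Type*} {G : SimpleGraph V}

lemma Conn.nonempty {B : Finset V} (h : Conn G B) : B.Nonempty :=
  let ⟨⟨x, hx⟩⟩ := SimpleGraph.Connected.nonempty h
  ⟨x, hx⟩

lemma conn_singleton (x : V) : Conn G {x} := by
  rw [Conn, coe_singleton]
  exact .of_subsingleton

lemma conn_univ [Fintype V] (hG : G.Connected) : Conn G univ := by
  rw [Conn, coe_univ]
  exact G.induceUnivIso.connected_iff.mpr hG

lemma Conn.exists_adj_sdiff {S A : Finset V} (hS : Conn G S) (hAS : A ⊆ S) {a b : V}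
    (ha : a ∈ A) (hb : b ∈ S) (hbA : b ∉ A) : ∃ x ∈ A, ∃ y ∈ S, y ∉ A ∧ G.Adj x y := by
  obtain ⟨p⟩ := hS.preconnected ⟨a, hAS ha⟩ ⟨b, hb⟩
  obtain ⟨d, -, hd₁, hd₂⟩ := p.exists_boundary_dart {x | x.1 ∈ A} ha hbA
  exact ⟨_, hd₁, _, d.snd.2, hd₂, d.adj⟩

variable [DecidableEq V]

lemma conn_pair {a b : V} (hab : G.Adj a b) : Conn G {a, b} := by
  rw [Conn, coe_pair]
  exact SimpleGraph.induce_pair_connected_of_adj hab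

lemma Conn.union {A B : Finset V} (hA : Conn G A) (hB : Conn G B) (h : (A ∩ B).Nonempty) :
    Conn G (A ∪ B) := by
  rw [Conn, coe_union]
  exact SimpleGraph.induce_union_connected hA.preconnected hB.preconnected (by exact_mod_cast h)

lemma Conn.union_of_adj {A B : Finset V} {a b : V} (hA : Conn G A) (hB : Conn G B)
    (ha : a ∈ A) (hb : b ∈ B) (hab : G.Adj a b) : Conn G (A ∪ B) := by
  rw [Conn, coe_union]
  exact SimpleGraph.connected_induce_union hA.preconnected hB.preconnected ha hb hab

end Connectivity

section Compatibility

variable {V : Type*} {G : SimpleGraph V} {A B T : Finset V}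

lemma Orth.symm (h : Orth G A B) : Orth G B A :=
  fun a ha b hb hab => h b hb a ha hab.symm

lemma Orth.mono {A' B' : Finset V} (h : Orth G A B) (hA : A' ⊆ A) (hB : B' ⊆ B) :
    Orth G A' B' :=
  fun a ha b hb => h a (hA ha) b (hB hb)

lemma Compat.symm (h : Compat G A B) : Compat G B A := by
  rcases h with h | h | h
  exacts [Or.inr (Or.inl h), Or.inl h, Or.inr (Or.inr h.symm)]

lemma Compat.union_right [DecidableEq V] {p q : V} (hp : p ∈ A) (hq : q ∈ B)
    (hpq : G.Adj p q) (hA : Compat G T A) (hB : Compat G T B) : Compat G T (A ∪ B) := by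
  rcases hA with hA | hA | hA
  · exact Or.inl (hA.trans subset_union_left)
  · rcases hB with hB | hB | hB
    · exact Or.inl (hB.trans subset_union_right)
    · exact Or.inr (Or.inl (union_subset hA hB))
    · exact absurd hpq (hB p (hA hp) q hq)
  · rcases hB with hB | hB | hB
    · exact Or.inl (hB.trans subset_union_right)
    · exact absurd hpq.symm (hA q (hB hq) p hp)
    · exact Or.inr (Or.inr fun x hx y hy =>
        (mem_union.mp hy).elim (hA x hx y) (hB x hx y))

end Compatibility

section Components

variable {V : Type*} {G : SimpleGraph V} {S B C D P Q : Finset V}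

lemma exists_isCC {x : V} (hx : x ∈ S) : ∃ C, IsCC G S C ∧ x ∈ C := by
  obtain ⟨C, hC, hmax⟩ := (S.powerset.filter fun C => x ∈ C ∧ Conn G C).exists_max_image
    card ⟨{x}, mem_filter.mpr ⟨mem_powerset.mpr
      (singleton_subset_iff.mpr hx), mem_singleton_self x, conn_singleton x⟩⟩
  simp only [mem_filter, mem_powerset] at hC hmax
  refine ⟨C, ⟨hC.1, hC.2.2, fun C' hCC' hC'S hC' => ?_⟩, hC.2.1⟩
  exact (eq_of_subset_of_card_le hCC' (hmax C' ⟨hC'S, hCC' hC.2.1, hC'⟩)).symm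

namespace IsCC

lemma nonempty (h : IsCC G S C) : C.Nonempty := h.2.1.nonempty

variable [DecidableEq V]

lemma subset_of_conn (h : IsCC G S C) (hD : Conn G D) (hDS : D ⊆ S) {x : V} (hxD : x ∈ D)
    (hxC : x ∈ C) : D ⊆ C := by
  rw [← h.2.2 (D ∪ C) subset_union_right (union_subset hDS h.1)
    (hD.union h.2.1 ⟨x, mem_inter.mpr ⟨hxD, hxC⟩⟩)]
  exact subset_union_left

lemma mem_of_adj (h : IsCC G S C) {a b : V} (ha : a ∈ C) (hb : b ∈ S) (hab : G.Adj a b) :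
    b ∈ C :=
  h.subset_of_conn (conn_pair hab) (by simp [insert_subset_iff, h.1 ha, hb])
    (mem_insert_self a {b}) ha (by simp)

lemma eq_of_mem {C' : Finset V} (h : IsCC G S C) (h' : IsCC G S C') {x : V} (hx : x ∈ C)
    (hx' : x ∈ C') : C = C' :=
  (h'.subset_of_conn h.2.1 h.1 hx hx').antisymm (h.subset_of_conn h'.2.1 h'.1 hx' hx)

lemma subset_or_orth (h : IsCC G S C) (hD : Conn G D) (hDS : D ⊆ S) : D ⊆ C ∨ Orth G D C := by
  refine or_iff_not_imp_right.mpr fun hD' => ?_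
  simp only [Orth, not_forall, not_not] at hD'
  obtain ⟨a, ha, b, hb, hab⟩ := hD'
  exact h.subset_of_conn hD hDS ha (h.mem_of_adj hb (hDS ha) hab.symm)

lemma orth_of_ne {C' : Finset V} (h : IsCC G S C) (h' : IsCC G S C') (hne : C ≠ C') :
    Orth G C C' :=
  fun _ ha _ hb hab => hne (h.eq_of_mem h' ha (h'.mem_of_adj hb (h.1 ha) hab.symm))

lemma compat {C' : Finset V} (h : IsCC G S C) (h' : IsCC G S C') : Compat G C C' := by
  by_cases hCC' : C = C'
  · exact Or.inl hCC'.subset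
  · exact Or.inr (Or.inr (h.orth_of_ne h' hCC'))

lemma exists_adj_of_erase {v : V} (hS : Conn G S) (hv : v ∈ S) (h : IsCC G (S.erase v) C) :
    ∃ w ∈ C, G.Adj w v := by
  obtain ⟨c, hc⟩ := h.nonempty
  obtain ⟨x, hxC, y, hyS, hyC, hxy⟩ := hS.exists_adj_sdiff (h.1.trans (S.erase_subset v)) hc hv
    fun hvC => notMem_erase v S (h.1 hvC)
  obtain rfl : y = v := by
    by_contra hyv
    exact hyC (h.mem_of_adj hxC (mem_erase.mpr ⟨hyv, hyS⟩) hxy)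
  exact ⟨x, hxC, hxy⟩

lemma eq_of_isCC_erase {a a' : V} (hB : Conn G B) (ha : a ∈ B) (h : IsCC G (B.erase a) C)
    (h' : IsCC G (B.erase a') C) : a = a' := by
  -- `a` is the only vertex of `B` outside `C` adjacent to `C`
  obtain ⟨w, hwC, hwa⟩ := h.exists_adj_of_erase hB ha
  by_contra hne
  exact notMem_erase a B (h.1 (h'.mem_of_adj hwC (mem_erase.mpr ⟨hne, ha⟩) hwa))

end IsCC

variable [DecidableEq V] {α β : V}

lemma subset_union_of_isCC_erase (hB : Conn G B) (hβ : β ∈ B) (hP : IsCC G (B.erase β) P)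
    (hαP : α ∈ P) (hQ : IsCC G (B.erase α) Q) (hβQ : β ∈ Q) : B ⊆ P ∪ Q := by
  intro x hx
  by_cases hxβ : x = β
  · exact mem_union_right _ (hxβ ▸ hβQ)
  obtain ⟨D, hD, hxD⟩ := exists_isCC (G := G) (mem_erase.mpr ⟨hxβ, hx⟩)
  by_cases hαD : α ∈ D
  · exact mem_union_left _ (hD.eq_of_mem hP hαD hαP ▸ hxD)
  -- a component of `B - β` avoiding `α` is attached to `β`, hence lies in `Q`
  obtain ⟨w, hwD, hwβ⟩ := hD.exists_adj_of_erase hB hβ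
  have hDα : D ⊆ B.erase α := subset_erase.mpr ⟨hD.1.trans (B.erase_subset β), hαD⟩
  have hwQ : w ∈ Q := hQ.mem_of_adj hβQ (hDα hwD) hwβ.symm
  exact mem_union_right _ (hQ.subset_of_conn hD.2.1 hDα hwD hwQ hxD)

lemma not_compat_of_isCC_erase (hB : Conn G B) (hβ : β ∈ B) (hP : IsCC G (B.erase β) P)
    (hαP : α ∈ P) (hQ : IsCC G (B.erase α) Q) (hβQ : β ∈ Q) : ¬ Compat G P Q := by
  rintro (h | h | h)
  · exact notMem_erase α B (hQ.1 (h hαP))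
  · exact notMem_erase β B (hP.1 (h hβQ))
  · obtain ⟨w, hwP, hwβ⟩ := hP.exists_adj_of_erase hB hβ
    exact h w hwP β hβQ hwβ

end Components

section Interior

variable {V : Type*} [DecidableEq V] {G : SimpleGraph V} {H : Finset (Finset V)}
  {B T : Finset V} {b x : V}

lemma mem_iN : x ∈ iN H B ↔ ∃ T ∈ H, T ⊂ B ∧ x ∈ T := by
  simp [iN, and_assoc]

lemma iN_mono {H' : Finset (Finset V)} (h : H ⊆ H') : iN H B ⊆ iN H' B := fun _ hx =>
  let ⟨T, hT, hTB, hxT⟩ := mem_iN.mp hx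
  mem_iN.mpr ⟨T, h hT, hTB, hxT⟩

lemma notMem_of_notMem_iN (hx : x ∉ iN H B) (hT : T ∈ H) (hTB : T ⊂ B) : x ∉ T :=
  fun hxT => hx (mem_iN.mpr ⟨T, hT, hTB, hxT⟩)

lemma erase_subset_iN (hb : b ∈ B) (h : ∀ C, IsCC G (B.erase b) C → C ∈ H) :
    B.erase b ⊆ iN H B := fun _ hx =>
  let ⟨C, hC, hxC⟩ := exists_isCC (G := G) hx
  mem_iN.mpr ⟨C, h C hC, Finset.ssubset_of_subset_of_ssubset hC.1 (erase_ssubset hb), hxC⟩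

end Interior

section MaximalNestedSets

variable {V : Type*} [Fintype V] [DecidableEq V] {G : SimpleGraph V}
  {F N : Finset (Finset V)} {B C T : Finset V} {a b : V}

lemma Nested.insert_of_compat (hF : Nested G F) (hC : Conn G C) (h : ∀ T ∈ F, Compat G C T) :
    Nested G (insert C F) := by
  refine ⟨mem_insert_of_mem hF.1, ?_, ?_⟩
  · simp only [mem_insert, forall_eq_or_imp]
    exact ⟨hC, hF.2.1⟩
  · simp only [mem_insert, forall_eq_or_imp]
    exact ⟨⟨Or.inl subset_rfl, h⟩, fun B hB => ⟨(h B hB).symm, hF.2.2 B hB⟩⟩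

lemma Nested.erase (hF : Nested G F) (hC : C ≠ univ) : Nested G (F.erase C) :=
  ⟨mem_erase.mpr ⟨hC.symm, hF.1⟩, fun B hB => hF.2.1 B (mem_of_mem_erase hB),
    fun B hB B' hB' => hF.2.2 B (mem_of_mem_erase hB) B' (mem_of_mem_erase hB')⟩

lemma Nested.exists_maxNested (hN : Nested G N) : ∃ F, MaxNested G F ∧ N ⊆ F := by
  obtain ⟨F, hF, hmax⟩ := (univ.filter fun K => Nested G K ∧ N ⊆ K).exists_max_image
    card ⟨N, by simp [hN]⟩
  simp only [mem_filter, mem_univ, true_and] at hF hmax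
  exact ⟨F, ⟨hF.1, fun K hK hFK =>
    (eq_of_subset_of_card_le hFK (hmax K ⟨hK, hF.2.trans hFK⟩)).symm⟩, hF.2⟩

lemma MaxNested.mem_of_compat (hF : MaxNested G F) (hC : Conn G C)
    (h : ∀ T ∈ F, Compat G C T) : C ∈ F :=
  hF.2 _ (hF.1.insert_of_compat hC h) (subset_insert C F) ▸ mem_insert_self C F

lemma Nested.compat_of_isCC_erase (hF : Nested G F) (hB : B ∈ F) (hb : b ∉ iN F B)
    (hC : IsCC G (B.erase b) C) (hT : T ∈ F) : Compat G C T := by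
  have hCB : C ⊆ B := hC.1.trans (B.erase_subset b)
  rcases hF.2.2 B hB T hT with h | h | h
  · exact Or.inl (hCB.trans h)
  · by_cases hTB : T = B
    · exact Or.inl (hTB ▸ hCB)
    have hTb : T ⊆ B.erase b := subset_erase.mpr
      ⟨h, notMem_of_notMem_iN hb hT (Finset.ssubset_iff_subset_ne.mpr ⟨h, hTB⟩)⟩
    rcases hC.subset_or_orth (hF.2.1 T hT) hTb with h' | h'
    exacts [Or.inr (Or.inl h'), Or.inr (Or.inr h'.symm)]
  · exact Or.inr (Or.inr (h.mono hCB subset_rfl))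

lemma MaxNested.mem_of_isCC_erase (hF : MaxNested G F) (hB : B ∈ F) (hb : b ∉ iN F B)
    (hC : IsCC G (B.erase b) C) : C ∈ F :=
  hF.mem_of_compat hC.2.1 fun _ hT => hF.1.compat_of_isCC_erase hB hb hC hT

lemma Nested.sdiff_iN_nonempty (hF : Nested G F) (hB : B ∈ F) : (B \ iN F B).Nonempty := by
  by_contra hcov
  rw [not_nonempty_iff_eq_empty, sdiff_eq_empty_iff_subset] at hcov
  have hBc : Conn G B := hF.2.1 B hB
  obtain ⟨b, hb⟩ := hBc.nonempty
  obtain ⟨T₀, hT₀, hT₀B, -⟩ := mem_iN.mp (hcov hb)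
  -- a largest element `M` of `F` strictly below `B` has an edge leaving it inside `B`,
  -- whose far end is covered by an element of `F` incompatible with `M`
  obtain ⟨M, hM, hmax⟩ := (F.filter (· ⊂ B)).exists_max_image card
    ⟨T₀, mem_filter.mpr ⟨hT₀, hT₀B⟩⟩
  rw [mem_filter] at hM
  obtain ⟨m, hm⟩ := (hF.2.1 M hM.1).nonempty
  obtain ⟨y, hyB, hyM⟩ := exists_of_ssubset hM.2
  obtain ⟨x, hxM, z, hzB, hzM, hxz⟩ := hBc.exists_adj_sdiff hM.2.1 hm hyB hyM
  obtain ⟨T, hT, hTB, hzT⟩ := mem_iN.mp (hcov hzB)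
  rcases hF.2.2 M hM.1 T hT with h | h | h
  · have hMT : M ⊂ T := Finset.ssubset_iff_subset_ne.mpr ⟨h, fun e => hzM (e ▸ hzT)⟩
    exact (card_lt_card hMT).not_ge (hmax T (mem_filter.mpr ⟨hT, hTB⟩))
  · exact hzM (h hzT)
  · exact h x hxM z hzT hxz

lemma MaxNested.exists_sdiff_iN_eq_singleton (hF : MaxNested G F) (hB : B ∈ F) :
    ∃ a, B \ iN F B = {a} := by
  rw [← card_eq_one]
  refine le_antisymm (card_le_one.mpr fun a ha b hb => ?_)
    (hF.1.sdiff_iN_nonempty hB).card_pos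
  rw [mem_sdiff] at ha hb
  by_contra hab
  obtain ⟨C, hC, haC⟩ := exists_isCC (G := G) (mem_erase.mpr ⟨hab, ha.1⟩)
  have hCB : C ⊂ B := Finset.ssubset_of_subset_of_ssubset hC.1 (erase_ssubset hb.1)
  exact ha.2 (mem_iN.mpr ⟨C, hF.mem_of_isCC_erase hB hb.2 hC, hCB, haC⟩)

lemma MaxNested.sdiff_iN_eq_singleton (hF : MaxNested G F) (hB : B ∈ F) (ha : a ∈ B)
    (h : B.erase a ⊆ iN F B) : B \ iN F B = {a} := by
  obtain ⟨a', ha'⟩ := hF.exists_sdiff_iN_eq_singleton hB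
  obtain ⟨ha'B, ha'F⟩ := mem_sdiff_of_sdiff_eq_singleton ha'
  obtain rfl : a' = a := by
    by_contra hne
    exact ha'F (h (mem_erase.mpr ⟨hne, ha'B⟩))
  exact ha'

end MaximalNestedSets

section ElementaryPairs

variable {V : Type*} [Fintype V] [DecidableEq V] {G : SimpleGraph V}
  {F Gs : Finset (Finset V)} {P Q : Finset V}

lemma suppP_eq_union (hP : F \ Gs = {P}) (hQ : Gs \ F = {Q}) : suppP F Gs = P ∪ Q := by
  simp [suppP, hP, hQ]

lemma suppP_comm : suppP F Gs = suppP Gs F := by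
  rw [suppP, suppP, union_comm]

lemma not_compat_of_sdiff (hF : MaxNested G F) (hGs : MaxNested G Gs) (hP : F \ Gs = {P})
    (hQ : Gs \ F = {Q}) : ¬ Compat G P Q := by
  obtain ⟨hPF, hPGs⟩ := mem_sdiff_of_sdiff_eq_singleton hP
  refine fun hPQ => hPGs (hGs.mem_of_compat (hF.1.2.1 P hPF) fun T hT => ?_)
  by_cases hTQ : T = Q
  · exact hTQ ▸ hPQ
  · exact hF.1.2.2 P hPF T (mem_of_sdiff_eq_singleton hQ hT hTQ)

lemma union_mem_of_sdiff (hF : MaxNested G F) (hGs : MaxNested G Gs) (hP : F \ Gs = {P})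
    (hQ : Gs \ F = {Q}) : P ∪ Q ∈ F := by
  have hPQ := not_compat_of_sdiff hF hGs hP hQ
  obtain ⟨hPF, -⟩ := mem_sdiff_of_sdiff_eq_singleton hP
  obtain ⟨hQGs, -⟩ := mem_sdiff_of_sdiff_eq_singleton hQ
  obtain ⟨p, hp, q, hq, hpq⟩ : ∃ p ∈ P, ∃ q ∈ Q, G.Adj p q := by
    by_contra! h
    exact hPQ (Or.inr (Or.inr h))
  refine hF.mem_of_compat ((hF.1.2.1 P hPF).union_of_adj (hGs.1.2.1 Q hQGs) hp hq hpq)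
    fun T hT => ?_
  by_cases hTP : T = P
  · exact Or.inr (Or.inl (hTP ▸ subset_union_left))
  have hTGs := mem_of_sdiff_eq_singleton hP hT hTP
  exact (Compat.union_right hp hq hpq (hF.1.2.2 T hT P hPF) (hGs.1.2.2 T hTGs Q hQGs)).symm

lemma suppP_mem_left (hF : MaxNested G F) (hGs : MaxNested G Gs) (hP : F \ Gs = {P})
    (hQ : Gs \ F = {Q}) : suppP F Gs ∈ F :=
  suppP_eq_union hP hQ ▸ union_mem_of_sdiff hF hGs hP hQ

lemma suppP_mem_right (hF : MaxNested G F) (hGs : MaxNested G Gs) (hP : F \ Gs = {P})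
    (hQ : Gs \ F = {Q}) : suppP F Gs ∈ Gs :=
  suppP_comm (F := F) ▸ suppP_mem_left hGs hF hQ hP

lemma isCC_suppP_erase_right (hF : MaxNested G F) (hGs : MaxNested G Gs) (hP : F \ Gs = {P})
    (hQ : Gs \ F = {Q}) {a b : V} (ha : suppP F Gs \ iN Gs (suppP F Gs) = {a})
    (hb : suppP F Gs \ iN F (suppP F Gs) = {b}) : IsCC G ((suppP F Gs).erase a) Q ∧ b ∈ Q := by
  have hBF := suppP_mem_left hF hGs hP hQ
  have hBGs := suppP_mem_right hF hGs hP hQ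
  rw [suppP_eq_union hP hQ] at ha hb hBF hBGs ⊢
  obtain ⟨haB, haGs⟩ := mem_sdiff_of_sdiff_eq_singleton ha
  obtain ⟨hbB, hbF⟩ := mem_sdiff_of_sdiff_eq_singleton hb
  obtain ⟨hPF, -⟩ := mem_sdiff_of_sdiff_eq_singleton hP
  obtain ⟨hQGs, hQF⟩ := mem_sdiff_of_sdiff_eq_singleton hQ
  have hPQ := not_compat_of_sdiff hF hGs hP hQ
  have hQB : Q ⊂ P ∪ Q :=
    Finset.ssubset_iff_subset_ne.mpr ⟨subset_union_right, fun e => hQF (e ▸ hBF)⟩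
  have hPB : P ⊂ P ∪ Q :=
    Finset.ssubset_iff_subset_ne.mpr ⟨subset_union_left, fun e => hPQ (Or.inr (Or.inl
      (e ▸ subset_union_right)))⟩
  have haQ : a ∉ Q := notMem_of_notMem_iN haGs hQGs hQB
  refine ⟨?_, (mem_union.mp hbB).resolve_left (notMem_of_notMem_iN hbF hPF hPB)⟩
  have hQa : Q ⊆ (P ∪ Q).erase a := subset_erase.mpr ⟨hQB.subset, haQ⟩
  obtain ⟨q, hq⟩ := (hGs.1.2.1 Q hQGs).nonempty
  obtain ⟨K, hK, hqK⟩ := exists_isCC (G := G) (hQa hq)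
  obtain rfl | hKQ := eq_or_ne K Q
  · exact hK
  -- otherwise the component `K ⊋ Q` would lie in `F` and be incompatible with `P`
  have hQK : Q ⊆ K := hK.subset_of_conn (hGs.1.2.1 Q hQGs) hQa hq hqK
  have hKF := mem_of_sdiff_eq_singleton hQ (hGs.mem_of_isCC_erase hBGs haGs hK) hKQ
  exfalso
  rcases hF.1.2.2 K hKF P hPF with h | h | h
  · exact hPQ (Or.inr (Or.inl (hQK.trans h)))
  · have haP : a ∈ P := (mem_union.mp haB).resolve_right haQ
    exact notMem_erase a _ (hK.1 (h haP))
  · exact hPQ (Or.inr (Or.inr (h.symm.mono subset_rfl hQK)))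

lemma isCC_suppP_erase (hF : MaxNested G F) (hGs : MaxNested G Gs) (hP : F \ Gs = {P})
    (hQ : Gs \ F = {Q}) {a b : V} (ha : suppP F Gs \ iN Gs (suppP F Gs) = {a})
    (hb : suppP F Gs \ iN F (suppP F Gs) = {b}) :
    (IsCC G ((suppP F Gs).erase a) Q ∧ b ∈ Q) ∧ (IsCC G ((suppP F Gs).erase b) P ∧ a ∈ P) := by
  refine ⟨isCC_suppP_erase_right hF hGs hP hQ ha hb, ?_⟩
  rw [suppP_comm] at ha hb ⊢
  exact isCC_suppP_erase_right hGs hF hQ hP hb ha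

theorem elemPair_sdiff_eq_iff {F' Gs' : Finset (Finset V)} (hF : MaxNested G F)
    (hGs : MaxNested G Gs) (hF' : MaxNested G F') (hGs' : MaxNested G Gs') (e : ElemPair F Gs)
    (e' : ElemPair F' Gs') :
    (F \ Gs = F' \ Gs' ∧ Gs \ F = Gs' \ F') ↔
      (suppP F Gs = suppP F' Gs' ∧
       (∀ a : V, suppP F Gs \ iN Gs (suppP F Gs) = {a} ↔
          suppP F' Gs' \ iN Gs' (suppP F' Gs') = {a}) ∧
       (∀ b : V, suppP F Gs \ iN F (suppP F Gs) = {b} ↔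
          suppP F' Gs' \ iN F' (suppP F' Gs') = {b})) := by
  obtain ⟨P, hP⟩ := card_eq_one.mp e.1
  obtain ⟨Q, hQ⟩ := card_eq_one.mp e.2
  obtain ⟨P', hP'⟩ := card_eq_one.mp e'.1
  obtain ⟨Q', hQ'⟩ := card_eq_one.mp e'.2
  obtain ⟨a, ha⟩ := hGs.exists_sdiff_iN_eq_singleton (suppP_mem_right hF hGs hP hQ)
  obtain ⟨b, hb⟩ := hF.exists_sdiff_iN_eq_singleton (suppP_mem_left hF hGs hP hQ)
  obtain ⟨a', ha'⟩ := hGs'.exists_sdiff_iN_eq_singleton (suppP_mem_right hF' hGs' hP' hQ')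
  obtain ⟨b', hb'⟩ := hF'.exists_sdiff_iN_eq_singleton (suppP_mem_left hF' hGs' hP' hQ')
  obtain ⟨⟨hQa, hbQ⟩, hPb, haP⟩ := isCC_suppP_erase hF hGs hP hQ ha hb
  obtain ⟨⟨hQa', hbQ'⟩, hPb', haP'⟩ := isCC_suppP_erase hF' hGs' hP' hQ' ha' hb'
  rw [forall_eq_singleton_iff_iff ha, forall_eq_singleton_iff_iff hb, ha, hb, ha',
    hb', hP, hQ, hP', hQ']
  simp only [singleton_inj]
  constructor
  · rintro ⟨rfl, rfl⟩
    have hB : suppP F Gs = suppP F' Gs' := by rw [suppP_eq_union hP hQ, suppP_eq_union hP' hQ']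
    rw [← hB] at hQa' hPb'
    have hBc : Conn G (suppP F Gs) := hF.1.2.1 _ (suppP_mem_left hF hGs hP hQ)
    exact ⟨hB, hQa.eq_of_isCC_erase hBc (mem_sdiff_of_sdiff_eq_singleton ha).1 hQa',
      hPb.eq_of_isCC_erase hBc (mem_sdiff_of_sdiff_eq_singleton hb).1 hPb'⟩
  · rintro ⟨hB, rfl, rfl⟩
    rw [← hB] at hQa' hPb'
    exact ⟨hPb.eq_of_mem hPb' haP haP', hQa.eq_of_mem hQa' hbQ hbQ'⟩

end ElementaryPairs

section Pivots

variable {V : Type*} [DecidableEq V] {G : SimpleGraph V}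
  {F : Finset (Finset V)} {B P T : Finset V} {α β : V}

lemma subset_erase_erase_of_ssubset (hβ : β ∉ iN F B) (hα : α ∉ iN F P)
    (hP : IsCC G (B.erase β) P) (hαP : α ∈ P) (hT : T ∈ F) (hTc : Conn G T) (hTB : T ⊂ B)
    (hTP : T ≠ P) : T ⊆ (B.erase β).erase α := by
  have hTβ : T ⊆ B.erase β := subset_erase.mpr ⟨hTB.subset, notMem_of_notMem_iN hβ hT hTB⟩
  refine subset_erase.mpr ⟨hTβ, fun hαT => ?_⟩
  have hTP' : T ⊂ P :=
    Finset.ssubset_iff_subset_ne.mpr ⟨hP.subset_of_conn hTc hTβ hαT hαP, hTP⟩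
  exact notMem_of_notMem_iN hα hT hTP' hαT

lemma erase_erase_subset_iN_erase (hβ : B \ iN F B = {β}) (hα : P \ iN F P = {α})
    (hPB : P ⊂ B) : (B.erase β).erase α ⊆ iN (F.erase P) B := by
  intro x hx
  simp only [mem_erase] at hx
  obtain ⟨hxα, hxβ, hxB⟩ := hx
  obtain ⟨T, hT, hTB, hxT⟩ := mem_iN.mp (mem_of_sdiff_eq_singleton hβ hxB hxβ)
  by_cases hTP : T = P
  · subst hTP
    obtain ⟨T', hT', hT'T, hxT'⟩ := mem_iN.mp (mem_of_sdiff_eq_singleton hα hxT hxα)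
    exact mem_iN.mpr ⟨T', mem_erase.mpr ⟨hT'T.ne, hT'⟩, hT'T.trans hTB, hxT'⟩
  · exact mem_iN.mpr ⟨T, mem_erase.mpr ⟨hTP, hT⟩, hTB, hxT⟩

end Pivots

section Flip

variable {V : Type*} [Fintype V] [DecidableEq V] {G : SimpleGraph V}
  {F : Finset (Finset V)} {B P Q : Finset V} {α β : V}

lemma nested_filter_isCC_erase (hGr : G.Connected) (hB : Conn G B) (hP : IsCC G (B.erase β) P) :
    Nested G (univ.filter fun T =>
      T = univ ∨ T = B ∨ IsCC G (B.erase β) T ∨ IsCC G (P.erase α) T) := by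
  have hPB : P ⊆ B := hP.1.trans (B.erase_subset β)
  have hlow_sub : ∀ T, IsCC G (B.erase β) T ∨ IsCC G (P.erase α) T → T ⊆ B := by
    rintro T (hT | hT)
    exacts [hT.1.trans (B.erase_subset β), (hT.1.trans (P.erase_subset α)).trans hPB]
  have hcross : ∀ T T', IsCC G (B.erase β) T → IsCC G (P.erase α) T' → Compat G T T' := by
    intro T T' hT hT'
    have hT'P : T' ⊆ P := hT'.1.trans (P.erase_subset α)
    by_cases hTP : T = P
    · exact Or.inr (Or.inl (hTP ▸ hT'P))
    · exact Or.inr (Or.inr ((hT.orth_of_ne hP hTP).mono subset_rfl hT'P))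
  have hlow : ∀ T T', IsCC G (B.erase β) T ∨ IsCC G (P.erase α) T →
      IsCC G (B.erase β) T' ∨ IsCC G (P.erase α) T' → Compat G T T' := by
    rintro T T' (hT | hT) (hT' | hT')
    · exact hT.compat hT'
    · exact hcross T T' hT hT'
    · exact (hcross T' T hT' hT).symm
    · exact hT.compat hT'
  refine ⟨by simp, ?_, ?_⟩ <;> simp only [mem_filter, mem_univ, true_and]
  · rintro T (rfl | rfl | hT | hT)
    exacts [conn_univ hGr, hB, hT.2.1, hT.2.1]
  · rintro T (rfl | rfl | hT) T' (rfl | rfl | hT')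
    · exact Or.inl subset_rfl
    · exact Or.inr (Or.inl (subset_univ _))
    · exact Or.inr (Or.inl (subset_univ _))
    · exact Or.inl (subset_univ _)
    · exact Or.inl subset_rfl
    · exact Or.inr (Or.inl (hlow_sub T' hT'))
    · exact Or.inl (subset_univ _)
    · exact Or.inl (hlow_sub T hT)
    · exact hlow T T' hT hT'

lemma exists_maxNested_pivots (hGr : G.Connected) (hB : Conn G B) (hβ : β ∈ B)
    (hP : IsCC G (B.erase β) P) (hαP : α ∈ P) :
    ∃ F, MaxNested G F ∧ B ∈ F ∧ B \ iN F B = {β} ∧ P ∈ F ∧ P \ iN F P = {α} := by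
  obtain ⟨F, hF, hNF⟩ := (nested_filter_isCC_erase (α := α) hGr hB hP).exists_maxNested
  have hmem : ∀ T, T = univ ∨ T = B ∨ IsCC G (B.erase β) T ∨ IsCC G (P.erase α) T →
      T ∈ F := fun T hT => hNF (mem_filter.mpr ⟨mem_univ T, hT⟩)
  have hBF : B ∈ F := hmem B (by tauto)
  have hPF : P ∈ F := hmem P (by tauto)
  refine ⟨F, hF, hBF, ?_, hPF, ?_⟩
  · exact hF.sdiff_iN_eq_singleton hBF hβ (erase_subset_iN hβ fun C hC => hmem C (by tauto))
  · exact hF.sdiff_iN_eq_singleton hPF hαP (erase_subset_iN hαP fun C hC => hmem C (by tauto))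

lemma Nested.flip (hF : Nested G F) (hB : B ∈ F) (hβ : B \ iN F B = {β})
    (hα : P \ iN F P = {α}) (hP : IsCC G (B.erase β) P) (hαP : α ∈ P)
    (hQ : IsCC G (B.erase α) Q) : Nested G (insert Q (F.erase P)) := by
  have hQB : Q ⊆ B := hQ.1.trans (B.erase_subset α)
  refine (hF.erase (C := P) fun e => notMem_erase β B (hP.1 (e ▸ mem_univ β))).insert_of_compat
    hQ.2.1 fun T hT => ?_
  obtain ⟨hTP, hT⟩ := mem_erase.mp hT
  rcases hF.2.2 B hB T hT with h | h | h
  · exact Or.inl (hQB.trans h)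
  · by_cases hTB : T = B
    · exact Or.inl (hTB ▸ hQB)
    have hTα : T ⊆ B.erase α := (subset_erase_erase_of_ssubset
      (mem_sdiff_of_sdiff_eq_singleton hβ).2 (mem_sdiff_of_sdiff_eq_singleton hα).2
      hP hαP hT (hF.2.1 T hT) (Finset.ssubset_iff_subset_ne.mpr ⟨h, hTB⟩) hTP).trans
      (erase_subset_erase α (B.erase_subset β))
    rcases hQ.subset_or_orth (hF.2.1 T hT) hTα with h' | h'
    exacts [Or.inr (Or.inl h'), Or.inr (Or.inr h'.symm)]
  · exact Or.inr (Or.inr (h.mono hQB subset_rfl))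

lemma erase_subset_iN_flip (hF : Nested G F) (hβ : B \ iN F B = {β})
    (hα : P \ iN F P = {α}) (hP : IsCC G (B.erase β) P) (hαP : α ∈ P)
    (hQ : IsCC G (B.erase α) Q) (hβQ : β ∈ Q) :
    B.erase α ⊆ iN (insert Q (F.erase P)) B ∧ Q.erase β ⊆ iN (insert Q (F.erase P)) Q := by
  have hβB := (mem_sdiff_of_sdiff_eq_singleton hβ).1
  have hαB : α ∈ B := mem_of_mem_erase (hP.1 hαP)
  have hPB : P ⊂ B := Finset.ssubset_of_subset_of_ssubset hP.1 (erase_ssubset hβB)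
  have hQB : Q ⊂ B := Finset.ssubset_of_subset_of_ssubset hQ.1 (erase_ssubset hαB)
  have hcov := erase_erase_subset_iN_erase hβ hα hPB
  constructor
  · intro x hx
    by_cases hxβ : x = β
    · exact mem_iN.mpr ⟨Q, mem_insert_self Q _, hQB, hxβ ▸ hβQ⟩
    · exact iN_mono (subset_insert Q _) (hcov (mem_erase.mpr ⟨(mem_erase.mp hx).1,
        mem_erase.mpr ⟨hxβ, mem_of_mem_erase hx⟩⟩))
  · intro x hx
    obtain ⟨hxβ, hxQ⟩ := mem_erase.mp hx
    have hxα : x ≠ α := fun e => notMem_erase α B (hQ.1 (e ▸ hxQ))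
    obtain ⟨T, hT, hTB, hxT⟩ := mem_iN.mp
      (hcov (show x ∈ (B.erase β).erase α by simp [hxα, hxβ, hQB.subset hxQ]))
    obtain ⟨hTP, hTF⟩ := mem_erase.mp hT
    have hTαβ := subset_erase_erase_of_ssubset (mem_sdiff_of_sdiff_eq_singleton hβ).2
      (mem_sdiff_of_sdiff_eq_singleton hα).2 hP hαP hTF (hF.2.1 T hTF) hTB hTP
    have hTQ : T ⊆ Q := hQ.subset_of_conn (hF.2.1 T hTF)
      (hTαβ.trans (erase_subset_erase α (B.erase_subset β))) hxT hxQ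
    have hβT : β ∉ T := fun h => by simpa using hTαβ h
    exact mem_iN.mpr ⟨T, mem_insert_of_mem hT,
      Finset.ssubset_iff_subset_ne.mpr ⟨hTQ, fun e => hβT (e ▸ hβQ)⟩, hxT⟩

lemma MaxNested.exists_flip (hF : MaxNested G F) (hB : B ∈ F) (hβ : B \ iN F B = {β})
    (hα : P \ iN F P = {α}) (hP : IsCC G (B.erase β) P) (hαP : α ∈ P)
    (hQ : IsCC G (B.erase α) Q) (hβQ : β ∈ Q) :
    ∃ Gs, MaxNested G Gs ∧ B ∈ Gs ∧ B \ iN Gs B = {α} ∧ Q \ iN Gs Q = {β} ∧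
      insert Q (F.erase P) ⊆ Gs := by
  obtain ⟨Gs, hGs, hsub⟩ := (hF.1.flip hB hβ hα hP hαP hQ).exists_maxNested
  have hPB : P ≠ B := fun e =>
    notMem_erase β B (hP.1 (e ▸ (mem_sdiff_of_sdiff_eq_singleton hβ).1))
  have hBGs : B ∈ Gs := hsub (mem_insert_of_mem (mem_erase.mpr ⟨hPB.symm, hB⟩))
  obtain ⟨hcovB, hcovQ⟩ := erase_subset_iN_flip hF.1 hβ hα hP hαP hQ hβQ
  exact ⟨Gs, hGs, hBGs,
    hGs.sdiff_iN_eq_singleton hBGs (mem_of_mem_erase (hP.1 hαP)) (hcovB.trans (iN_mono hsub)),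
    hGs.sdiff_iN_eq_singleton (hsub (mem_insert_self Q _)) hβQ (hcovQ.trans (iN_mono hsub)),
    hsub⟩

theorem exists_elemPair (hGr : G.Connected) (hB : Conn G B) (hα : α ∈ B) (hβ : β ∈ B)
    (hne : α ≠ β) :
    ∃ F Gs : Finset (Finset V), MaxNested G F ∧ MaxNested G Gs ∧ ElemPair F Gs ∧
      suppP F Gs = B ∧ B \ iN Gs B = {α} ∧ B \ iN F B = {β} := by
  obtain ⟨P, hP, hαP⟩ := exists_isCC (G := G) (mem_erase.mpr ⟨hne, hα⟩)
  obtain ⟨Q, hQ, hβQ⟩ := exists_isCC (G := G) (mem_erase.mpr ⟨hne.symm, hβ⟩)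
  have hPQ := not_compat_of_isCC_erase hB hβ hP hαP hQ hβQ
  obtain ⟨F, hF, hBF, hFβ, hPF, hFα⟩ := exists_maxNested_pivots hGr hB hβ hP hαP
  obtain ⟨Gs, hGs, hBGs, hGsα, hGsβ, hFGs⟩ := hF.exists_flip hBF hFβ hFα hP hαP hQ hβQ
  have hQGs : Q ∈ Gs := hFGs (mem_insert_self Q _)
  have hQF : Q ∉ F := fun h => hPQ (hF.1.2.2 P hPF Q h)
  have hPGs : P ∉ Gs := fun h => hPQ (hGs.1.2.2 P h Q hQGs)
  have hflip : insert P (Gs.erase Q) = F := by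
    refine hF.2 _ (hGs.1.flip hBGs hGsα hGsβ hQ hβQ hP) fun T hT => ?_
    by_cases hTP : T = P
    · rw [hTP]
      exact mem_insert_self P _
    · exact mem_insert_of_mem (mem_erase.mpr ⟨fun e => hQF (e ▸ hT),
        hFGs (mem_insert_of_mem (mem_erase.mpr ⟨hTP, hT⟩))⟩)
  obtain ⟨h₁, h₂⟩ := sdiff_eq_singleton_of_insert_erase_eq hflip hPGs hQGs
  refine ⟨F, Gs, hF, hGs, ⟨by rw [h₁, card_singleton], by rw [h₂, card_singleton]⟩,
    ?_, hGsα, hFβ⟩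
  rw [suppP_eq_union h₁ h₂]
  exact (union_subset (hP.1.trans (B.erase_subset β)) (hQ.1.trans (B.erase_subset α))).antisymm
    (subset_union_of_isCC_erase hB hβ hP hαP hQ hβQ)

end Flip

/-- The map `(Gs,F) ↦ (supp(Gs,F); α^{supp}_{Gs}, α^{supp}_F)` induces a
bijection between equivalence classes of elementary pairs of maximal nested sets on `D`
and triples `(B; α, β)` of a connected subdiagram `B ⊆ D` with an ordered pair of distinct
vertices of `B`. -/
theorem stmt7 {V : Type*} [Fintype V] [DecidableEq V]
    (Gr : SimpleGraph V) (hGr : Gr.Connected) :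
    (∀ F Gs F' Gs' : Finset (Finset V),
      MaxNested Gr F → MaxNested Gr Gs → MaxNested Gr F' → MaxNested Gr Gs' →
      ElemPair F Gs → ElemPair F' Gs' →
      ((F \ Gs = F' \ Gs' ∧ Gs \ F = Gs' \ F') ↔
        (suppP F Gs = suppP F' Gs' ∧
         (∀ a : V, suppP F Gs \ iN Gs (suppP F Gs) = {a} ↔
            suppP F' Gs' \ iN Gs' (suppP F' Gs') = {a}) ∧
         (∀ b : V, suppP F Gs \ iN F (suppP F Gs) = {b} ↔
            suppP F' Gs' \ iN F' (suppP F' Gs') = {b})))) ∧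
    (∀ B : Finset V, Conn Gr B → ∀ α ∈ B, ∀ β ∈ B, α ≠ β →
      ∃ F Gs : Finset (Finset V), MaxNested Gr F ∧ MaxNested Gr Gs ∧ ElemPair F Gs ∧
        suppP F Gs = B ∧ B \ iN Gs B = {α} ∧ B \ iN F B = {β}) :=
  ⟨fun _ _ _ _ hF hGs hF' hGs' e e' => elemPair_sdiff_eq_iff hF hGs hF' hGs' e e',
    fun _ hB _ hα _ hβ hne => exists_elemPair hGr hB hα hβ hne⟩
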